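/- arXiv:1810.03518 — 5 statements merged into one kernel-verified Lean document; each statement's English description precedes it below -/
import Mathlib

section
/- Let E be the exterior algebra over a field of characteristic 0 on generators e_h, and generators indexed by three pairwise disjoint finite sets P1, P2, P3 with |P_i| = a_i. Writing P_i also for the wedge product of its generators and C = P1 P2 P3, X1 = P2 P3, X2 = P1 P3, X3 = P1 P2, we have d(C) = d(P1) d(e_h X1) + (-1)^{a_1 a_2} d(P2) d(e_h X2) + (-1)^{(a_1+a_2) a_3} d(P3) d(e_h X3), where d is the graded derivation with d(e_a) = 1 on every generator. -/
variable {K : Type} [Field K] [CharZero K] {α : Type} [LinearOrder α]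

/-- The generator `e_a` of the exterior algebra indexed by `a`. -/
noncomputable def gen (K : Type) [Field K] {α : Type} (a : α) :
    ExteriorAlgebra K (α →₀ K) :=
  ExteriorAlgebra.ι K (Finsupp.single a (1 : K))

/-- For a finite subset `S = {a₁ < ⋯ < a_p}` of the index set, `eS K S` is the ordered
wedge product `e_{a₁} ∧ ⋯ ∧ e_{a_p}`. -/
noncomputable def eS (K : Type) [Field K] {α : Type} [LinearOrder α] (S : Finset α) :
    ExteriorAlgebra K (α →₀ K) :=
  ((S.sort (· ≤ ·)).map (fun a => gen K a)).prod

/-- `IsOSDiff d` says that `d` is the Orlik–Solomon boundary map: the linear map with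
`d 1 = 0`, `d e_a = 1`, and the graded Leibniz rule. -/
def IsOSDiff (K : Type) [Field K] {α : Type}
    (d : ExteriorAlgebra K (α →₀ K) →ₗ[K] ExteriorAlgebra K (α →₀ K)) : Prop :=
  d 1 = 0 ∧ (∀ a : α, d (gen K a) = 1) ∧
    ∀ (p : ℕ) (x y : ExteriorAlgebra K (α →₀ K)),
      x ∈ (LinearMap.range (ExteriorAlgebra.ι K (M := α →₀ K)) ^ p :
        Submodule K (ExteriorAlgebra K (α →₀ K))) →
      d (x * y) = d x * y + ((-1 : K) ^ p) • (x * d y)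

/-!
Since `d e_h = 1`, the Leibniz rule gives `d (e_h Y) = Y - e_h d Y`. For homogeneous `x` with
`d x = 0`, moving `e_h` past `x` costs the same sign as the Leibniz rule for `d (x Y)`, so
`x e_h d Y = e_h d (x Y)`; this applies to `x = d P_i` because `d ∘ d = 0`. The right-hand side is
therefore `T - e_h d T` with `T = d(P1) X1 + (-1)^{a₁a₂} d(P2) X2 + (-1)^{(a₁+a₂)a₃} d(P3) X3`. But
`T` is the Leibniz expansion of `d C`, so the right-hand side is `d C - e_h d (d C) = d C`.
-/

namespace ExteriorAlgebra

variable {R M : Type*} [CommRing R] [AddCommGroup M] [Module R M]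

theorem ι_mul_eq_neg_one_pow_smul (m : M) {q : ℕ} {y : ExteriorAlgebra R M}
    (hy : y ∈ ⋀[R]^q M) : ι R m * y = ((-1 : R) ^ q) • (y * ι R m) := by
  induction hy using Submodule.pow_induction_on_left' with
  | algebraMap r => simp [Algebra.commutes]
  | add x y i hx hy ihx ihy => rw [mul_add, add_mul, smul_add, ihx, ihy]
  | mem_mul m' hm' i x hx ih =>
    obtain ⟨n, rfl⟩ := hm'
    have swap : ι R m * ι R n = -(ι R n * ι R m) :=
      eq_neg_of_add_eq_zero_left (ι_add_mul_swap m n)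
    rw [← mul_assoc, swap, neg_mul, mul_assoc, ih, mul_smul_comm, ← mul_assoc, ← neg_smul,
      pow_succ, mul_neg_one]

theorem mul_eq_neg_one_pow_smul {p q : ℕ} {x y : ExteriorAlgebra R M}
    (hx : x ∈ ⋀[R]^p M) (hy : y ∈ ⋀[R]^q M) : x * y = ((-1 : R) ^ (p * q)) • (y * x) := by
  induction hx using Submodule.pow_induction_on_left' with
  | algebraMap r => simp [Algebra.commutes]
  | add x z i hx hz ihx ihz => rw [add_mul, mul_add, smul_add, ihx, ihz]
  | mem_mul m hm i z hz ih =>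
    obtain ⟨n, rfl⟩ := hm
    rw [mul_assoc, ih, mul_smul_comm, ← mul_assoc, ι_mul_eq_neg_one_pow_smul n hy,
      smul_mul_assoc, mul_assoc, smul_smul, ← pow_add, Nat.succ_mul, add_comm]

theorem ι_mem_exteriorPower_one (m : M) : ι R m ∈ ⋀[R]^1 M := by
  rw [exteriorPower, pow_one]
  exact ⟨m, rfl⟩

theorem mul_mem_exteriorPower_add {p q : ℕ} {x y : ExteriorAlgebra R M}
    (hx : x ∈ ⋀[R]^p M) (hy : y ∈ ⋀[R]^q M) : x * y ∈ ⋀[R]^(p + q) M := by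
  rw [exteriorPower, pow_add]
  exact Submodule.mul_mem_mul hx hy

end ExteriorAlgebra

theorem eS_mem_exteriorPower {K : Type} [Field K] {α : Type} [LinearOrder α] (S : Finset α) :
    eS K S ∈ ⋀[K]^S.card (α →₀ K) := by
  rw [eS, ← Finset.length_sort (· ≤ ·)]
  induction S.sort (· ≤ ·) with
  | nil => exact Submodule.one_le.mp le_rfl
  | cons a l ih =>
    rw [List.map_cons, List.prod_cons, List.length_cons, add_comm]
    exact ExteriorAlgebra.mul_mem_exteriorPower_add (ExteriorAlgebra.ι_mem_exteriorPower_one _) ih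

namespace IsOSDiff

open ExteriorAlgebra

variable {K : Type} [Field K] {α : Type}
  {d : ExteriorAlgebra K (α →₀ K) →ₗ[K] ExteriorAlgebra K (α →₀ K)}

theorem d_mul (hd : IsOSDiff K d) {p : ℕ} {x : ExteriorAlgebra K (α →₀ K)}
    (hx : x ∈ ⋀[K]^p (α →₀ K)) (y : ExteriorAlgebra K (α →₀ K)) :
    d (x * y) = d x * y + ((-1 : K) ^ p) • (x * d y) :=
  hd.2.2 p x y hx

theorem d_gen (hd : IsOSDiff K d) (a : α) : d (gen K a) = 1 :=
  hd.2.1 a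

theorem d_algebraMap (hd : IsOSDiff K d) (r : K) :
    d (algebraMap K (ExteriorAlgebra K (α →₀ K)) r) = 0 := by
  rw [Algebra.algebraMap_eq_smul_one, map_smul, hd.1, smul_zero]

theorem d_eq_zero_of_mem_exteriorPower_zero (hd : IsOSDiff K d) {x : ExteriorAlgebra K (α →₀ K)}
    (hx : x ∈ ⋀[K]^0 (α →₀ K)) : d x = 0 := by
  rw [exteriorPower, pow_zero, Submodule.mem_one] at hx
  obtain ⟨r, rfl⟩ := hx
  exact hd.d_algebraMap r

theorem exists_d_ι_eq_algebraMap (hd : IsOSDiff K d) (v : α →₀ K) :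
    ∃ r : K, d (ι K v) = algebraMap K (ExteriorAlgebra K (α →₀ K)) r := by
  induction v using Finsupp.induction_linear with
  | zero => exact ⟨0, by simp⟩
  | add f g ihf ihg =>
    obtain ⟨r, hr⟩ := ihf
    obtain ⟨s, hs⟩ := ihg
    exact ⟨r + s, by rw [map_add, map_add, hr, hs, map_add]⟩
  | single a b =>
    refine ⟨b, ?_⟩
    rw [← mul_one b, ← smul_eq_mul, ← Finsupp.smul_single, map_smul, map_smul, ← gen, hd.d_gen,
      smul_eq_mul, mul_one, Algebra.algebraMap_eq_smul_one]

theorem d_ι_mul (hd : IsOSDiff K d) {v : α →₀ K} {r : K}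
    (hr : d (ι K v) = algebraMap K (ExteriorAlgebra K (α →₀ K)) r)
    (y : ExteriorAlgebra K (α →₀ K)) : d (ι K v * y) = r • y - ι K v * d y := by
  rw [hd.d_mul (ι_mem_exteriorPower_one v) y, hr, ← Algebra.smul_def, pow_one, neg_one_smul,
    sub_eq_add_neg]

theorem d_mul_of_d_eq_one (hd : IsOSDiff K d) {e : ExteriorAlgebra K (α →₀ K)}
    (he : e ∈ ⋀[K]^1 (α →₀ K)) (hde : d e = 1) (y : ExteriorAlgebra K (α →₀ K)) :
    d (e * y) = y - e * d y := by
  rw [hd.d_mul he y, hde, one_mul, pow_one, neg_one_smul, sub_eq_add_neg]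

theorem d_mem_exteriorPower (hd : IsOSDiff K d) {p : ℕ} {x : ExteriorAlgebra K (α →₀ K)}
    (hx : x ∈ ⋀[K]^p (α →₀ K)) : d x ∈ ⋀[K]^(p - 1) (α →₀ K) := by
  induction hx using Submodule.pow_induction_on_left' with
  | algebraMap r => rw [hd.d_algebraMap]; exact zero_mem _
  | add x y i hx hy ihx ihy => rw [map_add]; exact add_mem ihx ihy
  | mem_mul m hm i y hy ih =>
    obtain ⟨v, rfl⟩ := hm
    obtain ⟨r, hr⟩ := hd.exists_d_ι_eq_algebraMap v
    rw [hd.d_ι_mul hr]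
    refine sub_mem (Submodule.smul_mem _ _ hy) ?_
    rcases i with _ | i
    · rw [hd.d_eq_zero_of_mem_exteriorPower_zero hy, mul_zero]
      exact zero_mem _
    · rw [Nat.succ_sub_one, add_comm]
      exact mul_mem_exteriorPower_add (ι_mem_exteriorPower_one v) ih

theorem d_d_eq_zero (hd : IsOSDiff K d) {p : ℕ} {x : ExteriorAlgebra K (α →₀ K)}
    (hx : x ∈ ⋀[K]^p (α →₀ K)) : d (d x) = 0 := by
  induction hx using Submodule.pow_induction_on_left' with
  | algebraMap r => rw [hd.d_algebraMap, map_zero]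
  | add x y i hx hy ihx ihy => rw [map_add, map_add, ihx, ihy, add_zero]
  | mem_mul m hm i y hy ih =>
    obtain ⟨v, rfl⟩ := hm
    obtain ⟨r, hr⟩ := hd.exists_d_ι_eq_algebraMap v
    rw [hd.d_ι_mul hr, map_sub, map_smul, hd.d_ι_mul hr, ih, mul_zero, sub_zero, sub_self]

theorem smul_d_mul_eq_smul_mul_d (hd : IsOSDiff K d) {b s : ℕ} {B Y : ExteriorAlgebra K (α →₀ K)}
    (hB : B ∈ ⋀[K]^b (α →₀ K)) (hY : Y ∈ ⋀[K]^s (α →₀ K)) :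
    ((-1 : K) ^ (b * s)) • (d B * Y) = ((-1 : K) ^ s) • (Y * d B) := by
  rcases b with _ | b
  · simp [hd.d_eq_zero_of_mem_exteriorPower_zero hB]
  · rw [mul_eq_neg_one_pow_smul (hd.d_mem_exteriorPower hB) hY, smul_smul, ← pow_add,
      Nat.add_sub_cancel, show (b + 1) * s + b * s = 2 * (b * s) + s by ring, pow_add, pow_mul,
      neg_one_sq, one_pow, one_mul]

theorem d_mul_mul (hd : IsOSDiff K d) {a b c : ℕ} {A B C : ExteriorAlgebra K (α →₀ K)}
    (hA : A ∈ ⋀[K]^a (α →₀ K)) (hB : B ∈ ⋀[K]^b (α →₀ K)) (hC : C ∈ ⋀[K]^c (α →₀ K)) :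
    d (A * B * C) = d A * (B * C) + ((-1 : K) ^ (a * b)) • (d B * (A * C))
      + ((-1 : K) ^ ((a + b) * c)) • (d C * (A * B)) := by
  have hAB := mul_mem_exteriorPower_add hA hB
  have hBA : ((-1 : K) ^ (a * b)) • (d B * (A * C)) = ((-1 : K) ^ a) • (A * (d B * C)) := by
    rw [← mul_assoc, ← smul_mul_assoc, Nat.mul_comm, hd.smul_d_mul_eq_smul_mul_d hB hA,
      smul_mul_assoc, mul_assoc]
  rw [hd.d_mul hAB C, hd.d_mul hA B, hBA, Nat.mul_comm (a + b), hd.smul_d_mul_eq_smul_mul_d hC hAB]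
  simp only [add_mul, smul_mul_assoc, mul_assoc]

theorem mul_mul_d_eq_mul_d_mul (hd : IsOSDiff K d) {p : ℕ} {x e : ExteriorAlgebra K (α →₀ K)}
    (hx : x ∈ ⋀[K]^p (α →₀ K)) (hdx : d x = 0) (he : e ∈ ⋀[K]^1 (α →₀ K))
    (y : ExteriorAlgebra K (α →₀ K)) : x * (e * d y) = e * d (x * y) := by
  rw [hd.d_mul hx y, hdx, zero_mul, zero_add, mul_smul_comm, ← mul_assoc, ← mul_assoc,
    mul_eq_neg_one_pow_smul hx he, mul_one, smul_mul_assoc]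

theorem d_mul_mul_eq_sum_d_mul_d_cone (hd : IsOSDiff K d) {e A B C : ExteriorAlgebra K (α →₀ K)}
    {a b c : ℕ} (he : e ∈ ⋀[K]^1 (α →₀ K)) (hde : d e = 1)
    (hA : A ∈ ⋀[K]^a (α →₀ K)) (hB : B ∈ ⋀[K]^b (α →₀ K)) (hC : C ∈ ⋀[K]^c (α →₀ K)) :
    d (A * B * C) = d A * d (e * (B * C))
      + ((-1 : K) ^ (a * b)) • (d B * d (e * (A * C)))
      + ((-1 : K) ^ ((a + b) * c)) • (d C * d (e * (A * B))) := by
  have hABC := mul_mem_exteriorPower_add (mul_mem_exteriorPower_add hA hB) hC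
  have hdd := congrArg (e * ·) (hd.d_d_eq_zero hABC)
  have cone : ∀ {n : ℕ} {X : ExteriorAlgebra K (α →₀ K)}, X ∈ ⋀[K]^n (α →₀ K) →
      ∀ Y, d X * d (e * Y) = d X * Y - e * d (d X * Y) := fun hX Y => by
    rw [hd.d_mul_of_d_eq_one he hde, mul_sub, hd.mul_mul_d_eq_mul_d_mul (hd.d_mem_exteriorPower hX)
      (hd.d_d_eq_zero hX) he]
  rw [hd.d_mul_mul hA hB hC] at hdd ⊢
  simp only [map_add, map_smul, mul_add, mul_smul_comm, mul_zero] at hdd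
  rw [cone hA, cone hB, cone hC, smul_sub, smul_sub]
  linear_combination (norm := module) hdd

end IsOSDiff

theorem stmt2_general
    (d : ExteriorAlgebra K (α →₀ K) →ₗ[K] ExteriorAlgebra K (α →₀ K))
    (hd : IsOSDiff K d) (h : α) (P1 P2 P3 : Finset α) :
    d (eS K P1 * eS K P2 * eS K P3) =
        d (eS K P1) * d (gen K h * (eS K P2 * eS K P3))
      + ((-1 : K) ^ (P1.card * P2.card)) •
          (d (eS K P2) * d (gen K h * (eS K P1 * eS K P3)))
      + ((-1 : K) ^ ((P1.card + P2.card) * P3.card)) •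
          (d (eS K P3) * d (gen K h * (eS K P1 * eS K P2))) :=
  hd.d_mul_mul_eq_sum_d_mul_d_cone (ExteriorAlgebra.ι_mem_exteriorPower_one _) (hd.d_gen h)
    (eS_mem_exteriorPower P1) (eS_mem_exteriorPower P2) (eS_mem_exteriorPower P3)

/-- Lemma 3.4 of the paper: for `C = P1 P2 P3` and `X_i` the crossings,
`d(C) = d(P1) d(e_h X1) + (-1)^{a1 a2} d(P2) d(e_h X2) + (-1)^{(a1+a2) a3} d(P3) d(e_h X3)`. -/
theorem stmt2 [Fintype α]
    (d : ExteriorAlgebra K (α →₀ K) →ₗ[K] ExteriorAlgebra K (α →₀ K))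
    (hd : IsOSDiff K d) (h : α) (P1 P2 P3 : Finset α)
    (h12 : Disjoint P1 P2) (h13 : Disjoint P1 P3) (h23 : Disjoint P2 P3)
    (hh1 : h ∉ P1) (hh2 : h ∉ P2) (hh3 : h ∉ P3) :
    d (eS K P1 * eS K P2 * eS K P3) =
        d (eS K P1) * d (gen K h * (eS K P2 * eS K P3))
      + ((-1 : K) ^ (P1.card * P2.card)) •
          (d (eS K P2) * d (gen K h * (eS K P1 * eS K P3)))
      + ((-1 : K) ^ ((P1.card + P2.card) * P3.card)) •
          (d (eS K P3) * d (gen K h * (eS K P1 * eS K P2))) :=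
  stmt2_general d hd h P1 P2 P3
end

section
/- Let G be a finite connected simple graph with vertex set V, and B ⊆ V an independent set of at least 2 vertices (boundary nodes). Define: a crossing is a minimal path in G between two distinct boundary nodes; let Ĝ be the graph obtained from G by adding an edge between every pair of boundary nodes. Then Ĝ is chordal if and only if there is no chordless cycle of G of length ≥ 4 meeting at most one boundary node, and no chordless crossing X (i.e., no edge of G joins two distinct vertices met by X) with |X| ≥ 3. -/
/-!
An edge of `Ĝ` that is not an edge of `G` joins two boundary nodes. Hence a cycle of `Ĝ`
meeting at most one boundary node is a cycle of `G` with the same chords. A cycle of `Ĝ`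
through two boundary nodes `x`, `y` has the chord `xy` unless `xy` is one of its edges; then
a third boundary node on it would have to be a cycle-neighbour of both `x` and `y`, impossible
on a cycle of length `≥ 4`, so the rest of the cycle is a crossing of `G`, and its chords are
chords of the cycle because `xy` is not an edge of `G`. Conversely, a crossing closed up by
the edge of `Ĝ` between its ends is a cycle of `Ĝ` whose chords all lie in `G`.
-/

open SimpleGraph

variable {V : Type}

/-- A *crossing* of `(G, B)` is a minimal path between two distinct boundary nodes,
i.e. a path whose endpoints are distinct boundary nodes and whose interior vertices
are not boundary nodes. -/
def IsCrossing (G : SimpleGraph V) (B : Set V) {a b : V} (p : G.Walk a b) : Prop :=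
  p.IsPath ∧ a ∈ B ∧ b ∈ B ∧ a ≠ b ∧ ∀ v ∈ p.support, v ∈ B → v = a ∨ v = b

def GHat (G : SimpleGraph V) (B : Set V) : SimpleGraph V :=
  G ⊔ SimpleGraph.fromRel (fun a b => a ∈ B ∧ b ∈ B)

def IsChordal (G : SimpleGraph V) : Prop :=
  ∀ (v : V) (p : G.Walk v v), p.IsCycle → 4 ≤ p.length →
    ∃ a b, G.Adj a b ∧ a ∈ p.support ∧ b ∈ p.support ∧ s(a, b) ∉ p.edges

namespace SimpleGraph.Walk

variable {G H : SimpleGraph V} {u v w x y : V} {e : Sym2 V}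

lemma exists_isChord_iff {p : G.Walk u v} :
    (∃ e, p.IsChord e) ↔ ∃ a b, G.Adj a b ∧ a ∈ p.support ∧ b ∈ p.support ∧ s(a, b) ∉ p.edges := by
  simp only [Sym2.exists, isChord_sym2Mk]
  tauto

lemma isChord_iff_of_toSubgraph_eq {p : G.Walk u v} {q : G.Walk x y}
    (h : p.toSubgraph = q.toSubgraph) : p.IsChord e ↔ q.IsChord e := by
  induction e using Sym2.ind
  simp only [isChord_sym2Mk, ← adj_toSubgraph_iff_mem_edges, ← mem_verts_toSubgraph, h]

lemma IsChord.of_transfer {p : G.Walk u v} {hp : ∀ e ∈ p.edges, e ∈ H.edgeSet}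
    (h : (p.transfer H hp).IsChord e) (he : e ∈ G.edgeSet) : p.IsChord e := by
  induction e using Sym2.ind
  simp_all [isChord_sym2Mk, edges_transfer, support_transfer]

lemma IsChord.of_mapLe {p : G.Walk u v} (hGH : G ≤ H) (h : (p.mapLe hGH).IsChord e)
    (he : e ∈ G.edgeSet) : p.IsChord e := by
  induction e using Sym2.ind
  simp_all [isChord_sym2Mk]

@[simp]
lemma isChord_reverse {p : G.Walk u v} : p.reverse.IsChord e ↔ p.IsChord e := by
  induction e using Sym2.ind
  simp [isChord_sym2Mk]

lemma IsChord.cons {q : G.Walk v w} (h : G.Adj u v) (hq : q.IsChord e) (he : e ≠ s(u, v)) :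
    (Walk.cons h q).IsChord e := by
  induction e using Sym2.ind
  simp_all [isChord_sym2Mk]

lemma IsChord.of_cons {q : G.Walk v u} {h : G.Adj u v} (hc : (Walk.cons h q).IsChord e) :
    q.IsChord e := by
  induction e using Sym2.ind
  simp only [isChord_sym2Mk, edges_cons, support_cons, List.mem_cons] at hc ⊢
  grind [end_mem_support]

lemma IsPath.snd_ne_penultimate {p : G.Walk u v} (hp : p.IsPath) (hl : 3 ≤ p.length) :
    p.snd ≠ p.penultimate := by
  intro h
  have := hp.getVert_injOn (show 1 ≤ p.length by omega) (show p.length - 1 ≤ p.length by omega) h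
  omega

lemma IsCycle.exists_cons_toSubgraph_eq [DecidableEq V] {c : G.Walk v v} (hc : c.IsCycle)
    (he : s(x, y) ∈ c.edges) :
    ∃ (h : G.Adj x y) (q : G.Walk y x), (cons h q).IsCycle ∧ (cons h q).length = c.length ∧
      (cons h q).toSubgraph = c.toSubgraph := by
  have hx : x ∈ c.support := c.fst_mem_support_of_mem_edges he
  have hd : (c.rotate x hx).IsCycle := hc.rotate hx
  have hy : y ∈ (c.rotate x hx).toSubgraph.neighborSet x := by
    rwa [toSubgraph_rotate, Subgraph.mem_neighborSet, adj_toSubgraph_iff_mem_edges]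
  obtain ⟨d, hdc, hdy, hdl, hds⟩ : ∃ d : G.Walk x x, d.IsCycle ∧ d.snd = y ∧
      d.length = c.length ∧ d.toSubgraph = c.toSubgraph := by
    rw [hd.neighborSet_toSubgraph_endpoint] at hy
    rcases hy with hy | hy
    · exact ⟨_, hd, hy.symm, by simp, by simp⟩
    · exact ⟨_, hd.reverse, by rw [snd_reverse, hy], by simp, by simp⟩
  cases d with
  | nil => exact absurd hdc not_isCycle_nil
  | cons h q =>
    rw [snd_cons] at hdy
    subst hdy
    exact ⟨h, q, hdc, hdl, hds⟩

end SimpleGraph.Walk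

open SimpleGraph.Walk

lemma IsChordal.exists_isChord {H : SimpleGraph V} (h : IsChordal H) {v : V} {c : H.Walk v v}
    (hc : c.IsCycle) (hl : 4 ≤ c.length) : ∃ e, c.IsChord e :=
  exists_isChord_iff.2 (h v c hc hl)

lemma isChordal_of_forall_exists_isChord {H : SimpleGraph V}
    (h : ∀ (v : V) (c : H.Walk v v), c.IsCycle → 4 ≤ c.length → ∃ e, c.IsChord e) :
    IsChordal H :=
  fun v c hc hl => exists_isChord_iff.1 (h v c hc hl)

section GHat

variable {G : SimpleGraph V} {B : Set V} {u v : V}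

lemma gHat_adj : (GHat G B).Adj u v ↔ G.Adj u v ∨ (u ≠ v ∧ u ∈ B ∧ v ∈ B) := by
  simp only [GHat, sup_adj, fromRel_adj]
  tauto

lemma le_gHat : G ≤ GHat G B := le_sup_left

lemma edges_subset_edgeSet_of_gHat {p : (GHat G B).Walk u v}
    (h : ∀ x ∈ B, ∀ y ∈ B, s(x, y) ∉ p.edges) : ∀ e ∈ p.edges, e ∈ G.edgeSet := by
  intro e he
  induction e using Sym2.ind with | _ x y =>
  rcases gHat_adj.1 (p.adj_of_mem_edges he) with hxy | ⟨-, hx, hy⟩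
  · exact hxy
  · exact absurd he (h x hx y hy)

lemma exists_isChord_of_isChordal_gHat_of_isCycle (hch : IsChordal (GHat G B))
    {p : G.Walk v v} (hp : p.IsCycle) (hl : 4 ≤ p.length)
    (hB : ∀ x ∈ p.support, x ∈ B → ∀ y ∈ p.support, y ∈ B → x = y) : ∃ e, p.IsChord e := by
  obtain ⟨e, he⟩ := hch.exists_isChord ((isCycle_mapLe le_gHat).2 hp) (by simpa)
  induction e using Sym2.ind with | _ a b =>
  refine ⟨s(a, b), he.of_mapLe le_gHat ?_⟩
  obtain ⟨hab, -, ha, hb⟩ := isChord_sym2Mk.1 he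
  rw [support_mapLe_eq_support] at ha hb
  rcases gHat_adj.1 hab with hab | ⟨hne, haB, hbB⟩
  · exact hab
  · exact absurd (hB a ha haB b hb hbB) hne

lemma exists_isChord_of_isChordal_gHat_of_isCrossing (hch : IsChordal (GHat G B))
    {a b : V} {p : G.Walk a b} (hp : IsCrossing G B p) (hl : 3 ≤ p.length) : ∃ e, p.IsChord e := by
  obtain ⟨hpath, haB, hbB, hab, hpB⟩ := hp
  have hab' : (GHat G B).Adj a b := gHat_adj.2 (Or.inr ⟨hab, haB, hbB⟩)
  have hc : (Walk.cons hab' (p.reverse.mapLe le_gHat)).IsCycle := by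
    rw [cons_isCycle_iff, isPath_mapLe, edges_mapLe_eq_edges, edges_reverse, List.mem_reverse]
    refine ⟨hpath.reverse, fun h => ?_⟩
    have := hpath.length_eq_one_of_mem_edges h
    omega
  obtain ⟨e, he⟩ := hch.exists_isChord hc (by simp; omega)
  induction e using Sym2.ind with | _ u w =>
  obtain ⟨huw, -, hu, hw⟩ := isChord_sym2Mk.1 he.of_cons
  simp only [support_mapLe_eq_support, support_reverse, List.mem_reverse] at hu hw
  refine ⟨s(u, w), isChord_reverse.1 (he.of_cons.of_mapLe le_gHat ?_)⟩
  rcases gHat_adj.1 huw with huw | ⟨-, huB, hwB⟩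
  · exact huw
  · have hclosing : s(u, w) ∈ (Walk.cons hab' (p.reverse.mapLe le_gHat)).edges := by
      rcases hpB u hu huB with rfl | rfl <;> rcases hpB w hw hwB with rfl | rfl <;>
        simp_all [Sym2.eq_swap]
    exact absurd hclosing (isChord_sym2Mk.1 he).2.1

lemma exists_isChord_of_isCycle_gHat_of_subsingleton
    (hcyc : ∀ (v : V) (p : G.Walk v v), p.IsCycle → 4 ≤ p.length →
      (∀ x ∈ p.support, x ∈ B → ∀ y ∈ p.support, y ∈ B → x = y) → ∃ e, p.IsChord e)
    {c : (GHat G B).Walk v v} (hc : c.IsCycle) (hl : 4 ≤ c.length)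
    (hB : ∀ x ∈ c.support, x ∈ B → ∀ y ∈ c.support, y ∈ B → x = y) : ∃ e, c.IsChord e := by
  have hG : ∀ e ∈ c.edges, e ∈ G.edgeSet := edges_subset_edgeSet_of_gHat fun x hx y hy hxy =>
    (c.adj_of_mem_edges hxy).ne (hB x (c.fst_mem_support_of_mem_edges hxy) hx
      y (c.snd_mem_support_of_mem_edges hxy) hy)
  obtain ⟨e, he⟩ := hcyc v (c.transfer G hG) (hc.transfer hG) (by simpa)
    (by simpa [support_transfer])
  exact ⟨e, he.of_transfer (edgeSet_mono le_gHat he.1)⟩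

lemma exists_isChord_cons_gHat (hind : ∀ a ∈ B, ∀ b ∈ B, ¬G.Adj a b)
    (hcross : ∀ (a b : V) (p : G.Walk a b), IsCrossing G B p → 3 ≤ p.length → ∃ e, p.IsChord e)
    {x y : V} (hx : x ∈ B) (hy : y ∈ B) {h : (GHat G B).Adj x y} {q : (GHat G B).Walk y x}
    (hc : (Walk.cons h q).IsCycle) (hl : 3 ≤ q.length) : ∃ e, (Walk.cons h q).IsChord e := by
  obtain ⟨hq, hxy⟩ := (cons_isCycle_iff q h).1 hc
  by_cases hqB : ∀ z ∈ q.support, z ∈ B → z = y ∨ z = x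
  · have hG : ∀ e ∈ q.edges, e ∈ G.edgeSet := edges_subset_edgeSet_of_gHat fun u hu w hw huw => by
      have hne := (q.adj_of_mem_edges huw).ne
      rcases hqB u (q.fst_mem_support_of_mem_edges huw) hu with rfl | rfl <;>
        rcases hqB w (q.snd_mem_support_of_mem_edges huw) hw with rfl | rfl <;>
        simp_all [Sym2.eq_swap]
    obtain ⟨e, he⟩ := hcross y x (q.transfer G hG)
      ⟨hq.transfer hG, hy, hx, h.ne.symm, by simpa [support_transfer] using hqB⟩ (by simpa)
    refine ⟨e, (he.of_transfer (edgeSet_mono le_gHat he.1)).cons h ?_⟩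
    rintro rfl
    exact hind x hx y hy he.1
  · push Not at hqB
    obtain ⟨z, hzq, hzB, hzy, hzx⟩ := hqB
    by_contra hno
    have hcl : (Walk.cons h q).IsChordless := fun e he => hno ⟨e, he⟩
    have hxz := hcl.mem_edges (start_mem_support _) (List.mem_cons_of_mem _ hzq)
      (gHat_adj.2 (Or.inr ⟨hzx.symm, hx, hzB⟩))
    have hyz := hcl.mem_edges (List.mem_cons_of_mem _ q.start_mem_support)
      (List.mem_cons_of_mem _ hzq) (gHat_adj.2 (Or.inr ⟨hzy.symm, hy, hzB⟩))
    simp only [edges_cons, List.mem_cons] at hxz hyz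
    apply hq.snd_ne_penultimate hl
    rw [← hq.eq_snd_of_mem_edges (hyz.resolve_left (by grind)),
      ← hq.eq_penultimate_of_mem_edges (hxz.resolve_left (by grind))]

end GHat

theorem stmt6_general (G : SimpleGraph V) (B : Set V) (hind : ∀ a ∈ B, ∀ b ∈ B, ¬G.Adj a b) :
    IsChordal (GHat G B) ↔
      ((∀ (v : V) (p : G.Walk v v), p.IsCycle → 4 ≤ p.length →
          (∀ x ∈ p.support, x ∈ B → ∀ y ∈ p.support, y ∈ B → x = y) →
          ∃ a b, G.Adj a b ∧ a ∈ p.support ∧ b ∈ p.support ∧ s(a, b) ∉ p.edges) ∧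
        (∀ (a b : V) (p : G.Walk a b), IsCrossing G B p → 3 ≤ p.length →
          ∃ x y, G.Adj x y ∧ x ∈ p.support ∧ y ∈ p.support ∧ s(x, y) ∉ p.edges)) := by
  classical
  simp only [← exists_isChord_iff]
  refine ⟨fun hch => ⟨fun _ _ hp hl hB => exists_isChord_of_isChordal_gHat_of_isCycle hch hp hl hB,
    fun _ _ _ hp hl => exists_isChord_of_isChordal_gHat_of_isCrossing hch hp hl⟩, ?_⟩
  rintro ⟨hcyc, hcross⟩
  refine isChordal_of_forall_exists_isChord fun v c hc hl => ?_
  by_cases hB : ∀ x ∈ c.support, x ∈ B → ∀ y ∈ c.support, y ∈ B → x = y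
  · exact exists_isChord_of_isCycle_gHat_of_subsingleton hcyc hc hl hB
  push Not at hB
  obtain ⟨x, hx, hxB, y, hy, hyB, hxy⟩ := hB
  by_cases hxyc : s(x, y) ∈ c.edges
  · obtain ⟨h, q, hqc, hql, hq⟩ := hc.exists_cons_toSubgraph_eq hxyc
    simp only [← isChord_iff_of_toSubgraph_eq hq]
    exact exists_isChord_cons_gHat hind hcross hxB hyB hqc (by rw [length_cons] at hql; omega)
  · exact ⟨s(x, y), isChord_sym2Mk.2 ⟨gHat_adj.2 (Or.inr ⟨hxy, hxB, hyB⟩), hxyc, hx, hy⟩⟩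

/-- `Ĝ` is chordal iff `G` has no chordless cycle of length ≥ 4 meeting at most one
boundary node and no chordless crossing with at least 3 edges. -/
theorem stmt6 [Fintype V] (G : SimpleGraph V) (hconn : G.Connected)
    (B : Set V) (hB : 2 ≤ B.ncard) (hind : ∀ a ∈ B, ∀ b ∈ B, ¬G.Adj a b) :
    IsChordal (GHat G B) ↔
      ((∀ (v : V) (p : G.Walk v v), p.IsCycle → 4 ≤ p.length →
          (∀ x ∈ p.support, x ∈ B → ∀ y ∈ p.support, y ∈ B → x = y) →
          ∃ a b, G.Adj a b ∧ a ∈ p.support ∧ b ∈ p.support ∧ s(a, b) ∉ p.edges) ∧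
        (∀ (a b : V) (p : G.Walk a b), IsCrossing G B p → 3 ≤ p.length →
          ∃ x y, G.Adj x y ∧ x ∈ p.support ∧ y ∈ p.support ∧ s(x, y) ∉ p.edges)) :=
  stmt6_general G B hind
end

section
/- The wheel graph W_5 on 5 vertices (a 4-cycle plus a central vertex adjacent to all four cycle vertices) is not hypersolvable: it admits no hypersolvable composition series of edge sets. -/
open SimpleGraph

variable {V : Type}

/-- A vertex `w` is met by an edge set `S` if some edge of `S` contains it. -/
def MetBy (S : Set (Sym2 V)) (w : V) : Prop := ∃ e ∈ S, w ∈ e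

/-- A containment `S ⊆ T` of edge sets of `G` is *solvable* if (a) no triangle of `G` has two
edges in `S` and one edge in `T \ S`, and (b) either `T \ S` is a single edge neither of whose
endpoints is met by `S`, or there are distinct vertices `v₁, …, v_k, v` met by `T`, with the
`vᵢ` met by `S`, such that `S` contains all edges among the `vᵢ` and
`T \ S = {v vᵢ ∈ E : i = 1, …, k}`. -/
def SolvableStep (G : SimpleGraph V) (S T : Set (Sym2 V)) : Prop :=
  (∀ a b c : V, G.Adj a b → G.Adj a c → G.Adj b c →
      ¬(s(a, b) ∈ S ∧ s(a, c) ∈ S ∧ s(b, c) ∈ T \ S)) ∧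
  ((∃ e, T \ S = {e} ∧ ∀ w, w ∈ e → ¬MetBy S w) ∨
    (∃ (k : ℕ) (vs : Fin k → V) (v : V),
      Function.Injective vs ∧ (∀ i, vs i ≠ v) ∧
      (∀ i, MetBy S (vs i)) ∧ MetBy T v ∧
      (∀ i j, i ≠ j → s(vs i, vs j) ∈ S) ∧
      T \ S = {x | ∃ i, x = s(v, vs i) ∧ x ∈ G.edgeSet}))

/-- A graph is *hypersolvable* if its edge set admits a hypersolvable composition series:
an increasing sequence `S₀ ⊆ ⋯ ⊆ Sₙ = E` of edge sets with `|S₀| = 1` in which each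
consecutive containment is solvable. -/
def Hypersolvable (G : SimpleGraph V) : Prop :=
  ∃ (n : ℕ) (S : Fin (n + 1) → Set (Sym2 V)),
    (∀ i, S i ⊆ G.edgeSet) ∧ (∃ e, S 0 = {e}) ∧ S (Fin.last n) = G.edgeSet ∧
    ∀ i : Fin n, S i.castSucc ⊆ S i.succ ∧ SolvableStep G (S i.castSucc) (S i.succ)

/-- The wheel graph `W₅` on 5 vertices: a 4-cycle `0-1-2-3-0` together with the central
vertex `4` adjacent to all four cycle vertices. -/
def W5 : SimpleGraph (Fin 5) :=
  SimpleGraph.fromRel (fun a b => a = 4 ∨ b = 4 ∨ (b.val = (a.val + 1) % 4 ∧ a ≠ 4 ∧ b ≠ 4))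

instance : DecidableRel W5.Adj := fun a b =>
  decidable_of_iff _ (SimpleGraph.fromRel_adj _ a b).symm

private noncomputable def tC (C : ℕ → Set (Sym2 (Fin 5))) (e : Sym2 (Fin 5)) : ℕ := sInf {m | e ∈ C m}


private lemma tri_cases {A B C : ℕ}
    (h1 : ¬(B < A ∧ C < A)) (h2 : ¬(A < B ∧ C < B)) (h3 : ¬(A < C ∧ B < C))
    (h4 : B = C → A < B) (h5 : A = B → C < A) (h6 : A = C → B < A) :
    (A < B ∧ B = C) ∨ (B < A ∧ A = C) ∨ (C < A ∧ A = B) := by omega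

private lemma final {a0 a1 a2 a3 b0 b1 b2 b3 : ℕ}
    (D0 : (a0 < b0 ∧ b0 = b1) ∨ (b0 < a0 ∧ a0 = b1) ∨ (b1 < a0 ∧ a0 = b0))
    (D1 : (a1 < b1 ∧ b1 = b2) ∨ (b1 < a1 ∧ a1 = b2) ∨ (b2 < a1 ∧ a1 = b1))
    (D2 : (a2 < b2 ∧ b2 = b3) ∨ (b2 < a2 ∧ a2 = b3) ∨ (b3 < a2 ∧ a2 = b2))
    (D3 : (a3 < b3 ∧ b3 = b0) ∨ (b3 < a3 ∧ a3 = b0) ∨ (b0 < a3 ∧ a3 = b3))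
    (F1 : a0 ≠ a1) (F2 : a1 ≠ a2) (F3 : a2 ≠ a3) (F4 : a3 ≠ a0)
    (F5 : b0 ≠ b2) (F6 : b1 ≠ b3)
    (F7 : a0 ≠ b2) (F8 : a0 ≠ b3) (F9 : a1 ≠ b3) (F10 : a1 ≠ b0)
    (F11 : a2 ≠ b0) (F12 : a2 ≠ b1) (F13 : a3 ≠ b1) (F14 : a3 ≠ b2) : False := by
  rcases D0 with ⟨h01,h02⟩|⟨h01,h02⟩|⟨h01,h02⟩ <;>
  rcases D1 with ⟨h11,h12⟩|⟨h11,h12⟩|⟨h11,h12⟩ <;>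
  rcases D2 with ⟨h21,h22⟩|⟨h21,h22⟩|⟨h21,h22⟩ <;>
  rcases D3 with ⟨h31,h32⟩|⟨h31,h32⟩|⟨h31,h32⟩ <;>
  omega

set_option maxHeartbeats 2000000 in
private lemma W5_aux {C : ℕ → Set (Sym2 (Fin 5))} {n : ℕ} {e0 : Sym2 (Fin 5)}
    (hmono : ∀ m, C m ⊆ C (m + 1))
    (hC0 : C 0 = {e0})
    (hCn : C n = W5.edgeSet)
    (hstepC : ∀ m, m < n → SolvableStep W5 (C m) (C (m + 1))) : False := by
  have hmono' : ∀ m m', m ≤ m' → C m ⊆ C m' := by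
    intro m m' h
    induction m', h using Nat.le_induction with
    | base => exact subset_rfl
    | succ m' hm ih => exact ih.trans (hmono m')
  have hmem : ∀ e, e ∈ W5.edgeSet → e ∈ C (tC C e) := by
    intro e he
    have hn : n ∈ {m | e ∈ C m} := by simp only [Set.mem_setOf_eq]; rw [hCn]; exact he
    exact Nat.sInf_mem ⟨n, hn⟩
  have hle : ∀ e m, e ∈ C m → tC C e ≤ m := fun e m h => Nat.sInf_le (show m ∈ {m | e ∈ C m} from h)
  have hnot : ∀ e m, m < tC C e → e ∉ C m := fun e m h hm => absurd (hle e m hm) (by omega)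
  have hmem' : ∀ e, e ∈ W5.edgeSet → ∀ m, tC C e ≤ m → e ∈ C m :=
    fun e he m h => hmono' _ _ h (hmem e he)
  have hbound : ∀ e, e ∈ W5.edgeSet → tC C e ≤ n := fun e he =>
    hle e n (by rw [hCn]; exact he)
  -- triangle lemma
  have tri : ∀ a b c : Fin 5, W5.Adj a b → W5.Adj a c → W5.Adj b c →
      ¬(tC C s(a,b) < tC C s(b,c) ∧ tC C s(a,c) < tC C s(b,c)) := by
    rintro a b c hab hac hbc ⟨h1, h2⟩
    have hbcE : s(b,c) ∈ W5.edgeSet := W5.mem_edgeSet.mpr hbc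
    have hmn : tC C s(b,c) ≤ n := hbound _ hbcE
    obtain ⟨m', hm'⟩ : ∃ m', tC C s(b,c) = m' + 1 := ⟨tC C s(b,c) - 1, by omega⟩
    exact (hstepC m' (by omega)).1 a b c hab hac hbc
      ⟨hmem' _ (W5.mem_edgeSet.mpr hab) m' (by omega),
       hmem' _ (W5.mem_edgeSet.mpr hac) m' (by omega),
       hmem' _ hbcE (m' + 1) (by omega), hnot _ m' (by omega)⟩
  -- pair lemma
  have pair : ∀ e1 e2, e1 ∈ W5.edgeSet → e2 ∈ W5.edgeSet → e1 ≠ e2 → tC C e1 = tC C e2 →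
      ∃ v a b : Fin 5, e1 = s(v,a) ∧ e2 = s(v,b) ∧ a ≠ b ∧ W5.Adj a b ∧
        tC C s(a,b) < tC C e1 := by
    intro e1 e2 h1 h2 hne heq
    have hb1 := hbound e1 h1
    rcases Nat.eq_zero_or_pos (tC C e1) with h0 | hpos
    · exfalso
      apply hne
      have m1 : e1 ∈ C 0 := by have := hmem e1 h1; rwa [h0] at this
      have m2 : e2 ∈ C 0 := by
        have := hmem e2 h2; rwa [← heq, h0] at this
      rw [hC0] at m1 m2
      exact m1.trans m2.symm
    obtain ⟨m', hm'⟩ : ∃ m', tC C e1 = m' + 1 := ⟨tC C e1 - 1, by omega⟩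
    have hd1 : e1 ∈ C (m' + 1) \ C m' := ⟨hmem' _ h1 _ (by omega), hnot _ _ (by omega)⟩
    have hd2 : e2 ∈ C (m' + 1) \ C m' :=
      ⟨hmem' _ h2 _ (by omega), hnot _ _ (by omega)⟩
    rcases (hstepC m' (by omega)).2 with ⟨e, hTS, -⟩ | ⟨k, vs, v, hinj, -, -, -, hclique, hTS⟩
    · rw [hTS] at hd1 hd2
      exact absurd (hd1.trans hd2.symm) hne
    · rw [hTS] at hd1 hd2
      obtain ⟨i, hi, -⟩ := hd1
      obtain ⟨j, hj, -⟩ := hd2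
      have hij : i ≠ j := by rintro rfl; exact hne (hi.trans hj.symm)
      have hS : s(vs i, vs j) ∈ C m' := hclique i j hij
      have hE : s(vs i, vs j) ∈ W5.edgeSet := by
        rw [← hCn]; exact hmono' m' n (by omega) hS
      exact ⟨v, vs i, vs j, hi, hj, hinj.ne hij, W5.mem_edgeSet.mp hE,
        lt_of_le_of_lt (hle _ _ hS) (by omega)⟩
  -- corollaries of pair
  have pairF : ∀ e1 e2, e1 ∈ W5.edgeSet → e2 ∈ W5.edgeSet → e1 ≠ e2 →
      (∀ v a b : Fin 5, e1 = s(v,a) → e2 = s(v,b) → a ≠ b → W5.Adj a b → False) →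
      tC C e1 ≠ tC C e2 := by
    intro e1 e2 h1 h2 hne habs heq
    obtain ⟨v, a, b, x1, x2, x3, x4, -⟩ := pair e1 e2 h1 h2 hne heq
    exact habs v a b x1 x2 x3 x4
  have pairT : ∀ e1 e2 tgt, e1 ∈ W5.edgeSet → e2 ∈ W5.edgeSet → e1 ≠ e2 →
      (∀ v a b : Fin 5, e1 = s(v,a) → e2 = s(v,b) → a ≠ b → W5.Adj a b → s(a,b) = tgt) →
      tC C e1 = tC C e2 → tC C tgt < tC C e1 := by
    intro e1 e2 tgt h1 h2 hne htg heq
    obtain ⟨v, a, b, x1, x2, x3, x4, x5⟩ := pair e1 e2 h1 h2 hne heq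
    rwa [htg v a b x1 x2 x3 x4] at x5
  have hsw : ∀ x y : Fin 5, tC C s(x,y) = tC C s(y,x) := fun x y => by rw [Sym2.eq_swap]
  have hFA0A1 : tC C s((0:Fin 5),1) ≠ tC C s((1:Fin 5),2) :=
    pairF _ _ (W5.mem_edgeSet.mpr (by decide : W5.Adj _ _)) (W5.mem_edgeSet.mpr (by decide : W5.Adj _ _)) (by decide) (by simp only [Sym2.eq_iff]; decide)
  have hFA1A2 : tC C s((1:Fin 5),2) ≠ tC C s((2:Fin 5),3) :=
    pairF _ _ (W5.mem_edgeSet.mpr (by decide : W5.Adj _ _)) (W5.mem_edgeSet.mpr (by decide : W5.Adj _ _)) (by decide) (by simp only [Sym2.eq_iff]; decide)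
  have hFA2A3 : tC C s((2:Fin 5),3) ≠ tC C s((3:Fin 5),0) :=
    pairF _ _ (W5.mem_edgeSet.mpr (by decide : W5.Adj _ _)) (W5.mem_edgeSet.mpr (by decide : W5.Adj _ _)) (by decide) (by simp only [Sym2.eq_iff]; decide)
  have hFA3A0 : tC C s((3:Fin 5),0) ≠ tC C s((0:Fin 5),1) :=
    pairF _ _ (W5.mem_edgeSet.mpr (by decide : W5.Adj _ _)) (W5.mem_edgeSet.mpr (by decide : W5.Adj _ _)) (by decide) (by simp only [Sym2.eq_iff]; decide)
  have hFA0A2 : tC C s((0:Fin 5),1) ≠ tC C s((2:Fin 5),3) :=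
    pairF _ _ (W5.mem_edgeSet.mpr (by decide : W5.Adj _ _)) (W5.mem_edgeSet.mpr (by decide : W5.Adj _ _)) (by decide) (by simp only [Sym2.eq_iff]; decide)
  have hFA1A3 : tC C s((1:Fin 5),2) ≠ tC C s((3:Fin 5),0) :=
    pairF _ _ (W5.mem_edgeSet.mpr (by decide : W5.Adj _ _)) (W5.mem_edgeSet.mpr (by decide : W5.Adj _ _)) (by decide) (by simp only [Sym2.eq_iff]; decide)
  have hFB0B2 : tC C s((0:Fin 5),4) ≠ tC C s((2:Fin 5),4) :=
    pairF _ _ (W5.mem_edgeSet.mpr (by decide : W5.Adj _ _)) (W5.mem_edgeSet.mpr (by decide : W5.Adj _ _)) (by decide) (by simp only [Sym2.eq_iff]; decide)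
  have hFB1B3 : tC C s((1:Fin 5),4) ≠ tC C s((3:Fin 5),4) :=
    pairF _ _ (W5.mem_edgeSet.mpr (by decide : W5.Adj _ _)) (W5.mem_edgeSet.mpr (by decide : W5.Adj _ _)) (by decide) (by simp only [Sym2.eq_iff]; decide)
  have hFA0B2 : tC C s((0:Fin 5),1) ≠ tC C s((2:Fin 5),4) :=
    pairF _ _ (W5.mem_edgeSet.mpr (by decide : W5.Adj _ _)) (W5.mem_edgeSet.mpr (by decide : W5.Adj _ _)) (by decide) (by simp only [Sym2.eq_iff]; decide)
  have hFA0B3 : tC C s((0:Fin 5),1) ≠ tC C s((3:Fin 5),4) :=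
    pairF _ _ (W5.mem_edgeSet.mpr (by decide : W5.Adj _ _)) (W5.mem_edgeSet.mpr (by decide : W5.Adj _ _)) (by decide) (by simp only [Sym2.eq_iff]; decide)
  have hFA1B3 : tC C s((1:Fin 5),2) ≠ tC C s((3:Fin 5),4) :=
    pairF _ _ (W5.mem_edgeSet.mpr (by decide : W5.Adj _ _)) (W5.mem_edgeSet.mpr (by decide : W5.Adj _ _)) (by decide) (by simp only [Sym2.eq_iff]; decide)
  have hFA1B0 : tC C s((1:Fin 5),2) ≠ tC C s((0:Fin 5),4) :=
    pairF _ _ (W5.mem_edgeSet.mpr (by decide : W5.Adj _ _)) (W5.mem_edgeSet.mpr (by decide : W5.Adj _ _)) (by decide) (by simp only [Sym2.eq_iff]; decide)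
  have hFA2B0 : tC C s((2:Fin 5),3) ≠ tC C s((0:Fin 5),4) :=
    pairF _ _ (W5.mem_edgeSet.mpr (by decide : W5.Adj _ _)) (W5.mem_edgeSet.mpr (by decide : W5.Adj _ _)) (by decide) (by simp only [Sym2.eq_iff]; decide)
  have hFA2B1 : tC C s((2:Fin 5),3) ≠ tC C s((1:Fin 5),4) :=
    pairF _ _ (W5.mem_edgeSet.mpr (by decide : W5.Adj _ _)) (W5.mem_edgeSet.mpr (by decide : W5.Adj _ _)) (by decide) (by simp only [Sym2.eq_iff]; decide)
  have hFA3B1 : tC C s((3:Fin 5),0) ≠ tC C s((1:Fin 5),4) :=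
    pairF _ _ (W5.mem_edgeSet.mpr (by decide : W5.Adj _ _)) (W5.mem_edgeSet.mpr (by decide : W5.Adj _ _)) (by decide) (by simp only [Sym2.eq_iff]; decide)
  have hFA3B2 : tC C s((3:Fin 5),0) ≠ tC C s((2:Fin 5),4) :=
    pairF _ _ (W5.mem_edgeSet.mpr (by decide : W5.Adj _ _)) (W5.mem_edgeSet.mpr (by decide : W5.Adj _ _)) (by decide) (by simp only [Sym2.eq_iff]; decide)
  have hTB0B1 : tC C s((0:Fin 5),4) = tC C s((1:Fin 5),4) → tC C s((0:Fin 5),1) < tC C s((0:Fin 5),4) :=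
    pairT _ _ s((0:Fin 5),1) (W5.mem_edgeSet.mpr (by decide : W5.Adj _ _)) (W5.mem_edgeSet.mpr (by decide : W5.Adj _ _)) (by decide) (by simp only [Sym2.eq_iff]; decide)
  have hTB1B2 : tC C s((1:Fin 5),4) = tC C s((2:Fin 5),4) → tC C s((1:Fin 5),2) < tC C s((1:Fin 5),4) :=
    pairT _ _ s((1:Fin 5),2) (W5.mem_edgeSet.mpr (by decide : W5.Adj _ _)) (W5.mem_edgeSet.mpr (by decide : W5.Adj _ _)) (by decide) (by simp only [Sym2.eq_iff]; decide)
  have hTB2B3 : tC C s((2:Fin 5),4) = tC C s((3:Fin 5),4) → tC C s((2:Fin 5),3) < tC C s((2:Fin 5),4) :=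
    pairT _ _ s((2:Fin 5),3) (W5.mem_edgeSet.mpr (by decide : W5.Adj _ _)) (W5.mem_edgeSet.mpr (by decide : W5.Adj _ _)) (by decide) (by simp only [Sym2.eq_iff]; decide)
  have hTB3B0 : tC C s((3:Fin 5),4) = tC C s((0:Fin 5),4) → tC C s((3:Fin 5),0) < tC C s((3:Fin 5),4) :=
    pairT _ _ s((3:Fin 5),0) (W5.mem_edgeSet.mpr (by decide : W5.Adj _ _)) (W5.mem_edgeSet.mpr (by decide : W5.Adj _ _)) (by decide) (by simp only [Sym2.eq_iff]; decide)
  have hTA0B0 : tC C s((0:Fin 5),1) = tC C s((0:Fin 5),4) → tC C s((1:Fin 5),4) < tC C s((0:Fin 5),1) :=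
    pairT _ _ s((1:Fin 5),4) (W5.mem_edgeSet.mpr (by decide : W5.Adj _ _)) (W5.mem_edgeSet.mpr (by decide : W5.Adj _ _)) (by decide) (by simp only [Sym2.eq_iff]; decide)
  have hTA0B1 : tC C s((0:Fin 5),1) = tC C s((1:Fin 5),4) → tC C s((0:Fin 5),4) < tC C s((0:Fin 5),1) :=
    pairT _ _ s((0:Fin 5),4) (W5.mem_edgeSet.mpr (by decide : W5.Adj _ _)) (W5.mem_edgeSet.mpr (by decide : W5.Adj _ _)) (by decide) (by simp only [Sym2.eq_iff]; decide)
  have hTA1B1 : tC C s((1:Fin 5),2) = tC C s((1:Fin 5),4) → tC C s((2:Fin 5),4) < tC C s((1:Fin 5),2) :=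
    pairT _ _ s((2:Fin 5),4) (W5.mem_edgeSet.mpr (by decide : W5.Adj _ _)) (W5.mem_edgeSet.mpr (by decide : W5.Adj _ _)) (by decide) (by simp only [Sym2.eq_iff]; decide)
  have hTA1B2 : tC C s((1:Fin 5),2) = tC C s((2:Fin 5),4) → tC C s((1:Fin 5),4) < tC C s((1:Fin 5),2) :=
    pairT _ _ s((1:Fin 5),4) (W5.mem_edgeSet.mpr (by decide : W5.Adj _ _)) (W5.mem_edgeSet.mpr (by decide : W5.Adj _ _)) (by decide) (by simp only [Sym2.eq_iff]; decide)
  have hTA2B2 : tC C s((2:Fin 5),3) = tC C s((2:Fin 5),4) → tC C s((3:Fin 5),4) < tC C s((2:Fin 5),3) :=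
    pairT _ _ s((3:Fin 5),4) (W5.mem_edgeSet.mpr (by decide : W5.Adj _ _)) (W5.mem_edgeSet.mpr (by decide : W5.Adj _ _)) (by decide) (by simp only [Sym2.eq_iff]; decide)
  have hTA2B3 : tC C s((2:Fin 5),3) = tC C s((3:Fin 5),4) → tC C s((2:Fin 5),4) < tC C s((2:Fin 5),3) :=
    pairT _ _ s((2:Fin 5),4) (W5.mem_edgeSet.mpr (by decide : W5.Adj _ _)) (W5.mem_edgeSet.mpr (by decide : W5.Adj _ _)) (by decide) (by simp only [Sym2.eq_iff]; decide)
  have hTA3B3 : tC C s((3:Fin 5),0) = tC C s((3:Fin 5),4) → tC C s((0:Fin 5),4) < tC C s((3:Fin 5),0) :=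
    pairT _ _ s((0:Fin 5),4) (W5.mem_edgeSet.mpr (by decide : W5.Adj _ _)) (W5.mem_edgeSet.mpr (by decide : W5.Adj _ _)) (by decide) (by simp only [Sym2.eq_iff]; decide)
  have hTA3B0 : tC C s((3:Fin 5),0) = tC C s((0:Fin 5),4) → tC C s((3:Fin 5),4) < tC C s((3:Fin 5),0) :=
    pairT _ _ s((3:Fin 5),4) (W5.mem_edgeSet.mpr (by decide : W5.Adj _ _)) (W5.mem_edgeSet.mpr (by decide : W5.Adj _ _)) (by decide) (by simp only [Sym2.eq_iff]; decide)
  have hTA0 := tri 4 0 1 (by decide) (by decide) (by decide)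
  rw [hsw 4 0, hsw 4 1] at hTA0
  have hTB0 := tri 1 0 4 (by decide) (by decide) (by decide)
  rw [hsw 1 0] at hTB0
  have hTC0 := tri 0 1 4 (by decide) (by decide) (by decide)
  have hTA1 := tri 4 1 2 (by decide) (by decide) (by decide)
  rw [hsw 4 1, hsw 4 2] at hTA1
  have hTB1 := tri 2 1 4 (by decide) (by decide) (by decide)
  rw [hsw 2 1] at hTB1
  have hTC1 := tri 1 2 4 (by decide) (by decide) (by decide)
  have hTA2 := tri 4 2 3 (by decide) (by decide) (by decide)
  rw [hsw 4 2, hsw 4 3] at hTA2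
  have hTB2 := tri 3 2 4 (by decide) (by decide) (by decide)
  rw [hsw 3 2] at hTB2
  have hTC2 := tri 2 3 4 (by decide) (by decide) (by decide)
  have hTA3 := tri 4 3 0 (by decide) (by decide) (by decide)
  rw [hsw 4 3, hsw 4 0] at hTA3
  have hTB3 := tri 0 3 4 (by decide) (by decide) (by decide)
  rw [hsw 0 3] at hTB3
  have hTC3 := tri 3 0 4 (by decide) (by decide) (by decide)
  exact final
    (tri_cases hTA0 hTB0 hTC0 hTB0B1 hTA0B0 hTA0B1)
    (tri_cases hTA1 hTB1 hTC1 hTB1B2 hTA1B1 hTA1B2)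
    (tri_cases hTA2 hTB2 hTC2 hTB2B3 hTA2B2 hTA2B3)
    (tri_cases hTA3 hTB3 hTC3 hTB3B0 hTA3B3 hTA3B0)
    hFA0A1 hFA1A2 hFA2A3 hFA3A0 hFB0B2 hFB1B3
    hFA0B2 hFA0B3 hFA1B3 hFA1B0 hFA2B0 hFA2B1 hFA3B1 hFA3B2

/-- The wheel graph on 5 vertices is not hypersolvable. -/
theorem stmt8 : ¬Hypersolvable W5 := by
  rintro ⟨n, S, -, ⟨e0, hS0⟩, hlast, hstep⟩
  refine W5_aux (C := fun m => S ⟨min m n, by omega⟩) (n := n) (e0 := e0) ?_ ?_ ?_ ?_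
  · intro m
    rcases lt_or_ge m n with h | h
    · have key := (hstep ⟨m, h⟩).1
      have e1 : (⟨min m n, by omega⟩ : Fin (n + 1)) = (⟨m, h⟩ : Fin n).castSucc := by
        apply Fin.ext; simp; omega
      have e2 : (⟨min (m + 1) n, by omega⟩ : Fin (n + 1)) = (⟨m, h⟩ : Fin n).succ := by
        apply Fin.ext; simp; omega
      show S _ ⊆ S _
      rw [e1, e2]; exact key
    · have hmin : min m n = min (m + 1) n := by omega
      show S _ ⊆ S _
      simp only [hmin]
      exact subset_rfl
  · have e1 : (⟨min 0 n, by omega⟩ : Fin (n + 1)) = 0 := by apply Fin.ext; simp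
    show S _ = _
    rw [e1]; exact hS0
  · have e1 : (⟨min n n, by omega⟩ : Fin (n + 1)) = Fin.last n := by apply Fin.ext; simp
    show S _ = _
    rw [e1]; exact hlast
  · intro m h
    have key := (hstep ⟨m, h⟩).2
    have e1 : (⟨min m n, by omega⟩ : Fin (n + 1)) = (⟨m, h⟩ : Fin n).castSucc := by
      apply Fin.ext; simp; omega
    have e2 : (⟨min (m + 1) n, by omega⟩ : Fin (n + 1)) = (⟨m, h⟩ : Fin n).succ := by
      apply Fin.ext; simp; omega
    show SolvableStep W5 (S _) (S _)
    rw [e1, e2]; exact key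
end

section
/- Let M be a matroid on a ground set containing distinct elements e_0, e_1, e_2, e_3 such that {e_0, e_1, e_3} and {e_0, e_2, e_3} are circuits and M has no circuits of size ≤ 2. Fix any linear order on the ground set. Then the minimal broken circuits of M with respect to this order are not pairwise disjoint. -/
variable {α : Type}

/-- A circuit of a matroid: a minimal dependent set. -/
def MatCircuit (M : Matroid α) (C : Set α) : Prop := Minimal M.Dep C

/-- A broken circuit with respect to a linear order on the ground set: a circuit with its
least element removed. -/
def BrokenCircuit [LinearOrder α] (M : Matroid α) (D : Set α) : Prop :=
  ∃ (C : Set α) (m : α), MatCircuit M C ∧ m ∈ C ∧ (∀ x ∈ C, m ≤ x) ∧ D = C \ {m}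

/-- A minimal broken circuit: one that does not properly contain another broken circuit. -/
def MinBrokenCircuit [LinearOrder α] (M : Matroid α) (D : Set α) : Prop :=
  BrokenCircuit M D ∧ ∀ D', BrokenCircuit M D' → D' ⊆ D → D' = D

/-!
Let `C₁ = {e₀, e₁, e₃}`, `C₂ = {e₀, e₂, e₃}`. Eliminating `e₃` from them gives a circuit inside
`{e₀, e₁, e₂}`, which is that whole triangle since there are no circuits of size at most two.
Removing the least element of a triangle leaves a broken circuit of size two, and these are
minimal. Two triangles sharing an edge `{a, b}` have intersecting broken circuits, as both keep
`max a b`. The broken circuits of `C₁` and `C₂` are distinct unless `min C₁ = e₁`; in that case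
`C₁` and `C₃ = {e₀, e₁, e₂}` share the edge `{e₀, e₁}`, and `e₃` separates their broken circuits.
-/

lemma matCircuit_iff {M : Matroid α} {C : Set α} : MatCircuit M C ↔ M.IsCircuit C := Iff.rfl

lemma ncard_triple {a b c : α} (hab : a ≠ b) (hac : a ≠ c) (hbc : b ≠ c) :
    ({a, b, c} : Set α).ncard = 3 :=
  Set.ncard_eq_three.2 ⟨a, b, c, hab, hac, hbc, rfl⟩

lemma matCircuit_triple_of_elimination {M : Matroid α} {a b c d : α}
    (hsmall : ∀ C, MatCircuit M C → C.Finite → 2 < C.ncard)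
    (hab : a ≠ b) (hac : a ≠ c) (hbc : b ≠ c) (hbd : b ≠ d)
    (h₁ : MatCircuit M {a, b, d}) (h₂ : MatCircuit M {a, c, d}) :
    MatCircuit M {a, b, c} := by
  have hne : ({a, b, d} : Set α) ≠ {a, c, d} := fun h ↦ by
    have hb : b ∈ ({a, c, d} : Set α) := h ▸ by simp
    simp [hab.symm, hbc, hbd] at hb
  obtain ⟨C, hCsub, hC⟩ := (matCircuit_iff.1 h₁).elimination (matCircuit_iff.1 h₂) hne d
  have hCabc : C ⊆ {a, b, c} := fun x hx ↦ by
    have := hCsub hx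
    simp only [Set.mem_sdiff, Set.mem_union, Set.mem_insert_iff, Set.mem_singleton_iff] at this
    simp only [Set.mem_insert_iff, Set.mem_singleton_iff]
    tauto
  have hCfin : C.Finite := (Set.toFinite {a, b, c}).subset hCabc
  have hCcard := hsmall C hC hCfin
  have hCeq : C = {a, b, c} :=
    Set.eq_of_subset_of_ncard_le hCabc (by rw [ncard_triple hab hac hbc]; omega)
  exact hCeq ▸ hC

section LinearOrder

variable [LinearOrder α]

lemma BrokenCircuit.minBrokenCircuit_of_ncard_eq {M : Matroid α} {k : ℕ} {D : Set α}
    (hsmall : ∀ C, MatCircuit M C → C.Finite → k < C.ncard)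
    (hD : BrokenCircuit M D) (hfin : D.Finite) (hcard : D.ncard = k) :
    MinBrokenCircuit M D := by
  refine ⟨hD, ?_⟩
  rintro _ ⟨C, m, hC, hm, -, rfl⟩ hsub
  have hCfin : C.Finite := (hfin.subset hsub).of_sdiff (Set.finite_singleton m)
  have hCcard := hsmall C hC hCfin
  have hkle : k ≤ (C \ {m}).ncard := by rw [Set.ncard_sdiff_singleton_of_mem hm]; omega
  exact Set.eq_of_subset_of_ncard_le hsub (hcard ▸ hkle) hfin

lemma exists_minBrokenCircuit_diff_min {M : Matroid α} {C : Set α}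
    (hsmall : ∀ C, MatCircuit M C → C.Finite → 2 < C.ncard)
    (hC : MatCircuit M C) (h3 : C.ncard = 3) :
    ∃ m, (∀ x ∈ C, m ≤ x) ∧ MinBrokenCircuit M (C \ {m}) := by
  have hfin : C.Finite := Set.finite_of_ncard_ne_zero (by omega)
  have hne : C.Nonempty := Set.nonempty_of_ncard_ne_zero (by omega)
  obtain ⟨m, hm, hle⟩ := Set.exists_min_image C id hfin hne
  refine ⟨m, hle, BrokenCircuit.minBrokenCircuit_of_ncard_eq hsmall ⟨C, m, hC, hm, hle, rfl⟩
    (hfin.subset Set.sdiff_subset) ?_⟩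
  rw [Set.ncard_sdiff_singleton_of_mem hm, h3]

lemma diff_min_inter_diff_min_nonempty {s t : Set α} {a b m m' : α} (hab : a ≠ b)
    (has : a ∈ s) (hbs : b ∈ s) (hat : a ∈ t) (hbt : b ∈ t)
    (hm : ∀ x ∈ s, m ≤ x) (hm' : ∀ x ∈ t, m' ≤ x) :
    (s \ {m} ∩ (t \ {m'})).Nonempty := by
  rcases hab.lt_or_gt with h | h
  · exact ⟨b, ⟨hbs, fun hbm ↦ (hm a has).not_gt (hbm ▸ h)⟩,
      ⟨hbt, fun hbm ↦ (hm' a hat).not_gt (hbm ▸ h)⟩⟩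
  · exact ⟨a, ⟨has, fun ham ↦ (hm b hbs).not_gt (ham ▸ h)⟩,
      ⟨hat, fun ham ↦ (hm' b hbt).not_gt (ham ▸ h)⟩⟩

end LinearOrder

/-- If `{e₀, e₁, e₃}` and `{e₀, e₂, e₃}` are circuits of a matroid with no circuits of size
at most 2, then for any linear order on the ground set the minimal broken circuits are
not pairwise disjoint. -/
theorem stmt9 [LinearOrder α] (M : Matroid α) (e0 e1 e2 e3 : α)
    (h01 : e0 ≠ e1) (h02 : e0 ≠ e2) (h03 : e0 ≠ e3)
    (h12 : e1 ≠ e2) (h13 : e1 ≠ e3) (h23 : e2 ≠ e3)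
    (hC1 : MatCircuit M {e0, e1, e3}) (hC2 : MatCircuit M {e0, e2, e3})
    (hsmall : ∀ C, MatCircuit M C → C.Finite → 2 < C.ncard) :
    ¬({D | MinBrokenCircuit M D}.Pairwise Disjoint) := by
  intro hpw
  have separated : ∀ {D D' : Set α}, MinBrokenCircuit M D → MinBrokenCircuit M D' →
      (D ∩ D').Nonempty → ∀ x ∈ D, x ∉ D' → False := fun hD hD' hmeet x hx hx' ↦
    Set.not_disjoint_iff_nonempty_inter.2 hmeet (hpw hD hD' fun h ↦ hx' (h ▸ hx))
  have hC3 := matCircuit_triple_of_elimination hsmall h01 h02 h12 h13 hC1 hC2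
  obtain ⟨m1, hm1, hD1⟩ := exists_minBrokenCircuit_diff_min hsmall hC1 (ncard_triple h01 h03 h13)
  obtain ⟨m2, hm2, hD2⟩ := exists_minBrokenCircuit_diff_min hsmall hC2 (ncard_triple h02 h03 h23)
  obtain ⟨m3, hm3, hD3⟩ := exists_minBrokenCircuit_diff_min hsmall hC3 (ncard_triple h01 h02 h12)
  by_cases hm1e1 : m1 = e1
  · subst hm1e1
    exact separated hD1 hD3
      (diff_min_inter_diff_min_nonempty h01 (by simp) (by simp) (by simp) (by simp) hm1 hm3) e3
      (by simp [h13.symm]) (by simp [h03.symm, h13.symm, h23.symm])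
  · exact separated hD1 hD2
      (diff_min_inter_diff_min_nonempty h03 (by simp) (by simp) (by simp) (by simp) hm1 hm2) e1
      (by simp [Ne.symm hm1e1]) (by simp [h01.symm, h12, h13])
end

section
/- Let G be a finite simple graph that contains the wheel graph W_5 on 5 vertices as an induced subgraph. Then G is not hypersolvable (admits no hypersolvable composition series). -/
open SimpleGraph

variable {V : Type}

/-! Record for each edge the time at which it enters the composition series. Condition (a)
forces the last edge of a triangle to enter together with another edge, and condition (b) forces
two edges entering together to share a vertex and to have adjacent other ends. In `W₅`, look at a
rim vertex `c` whose spoke enters last among the spokes, with rim neighbours `b` and `d`: applying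
these two facts to the triangles `b c 4` and `d c 4` shows that either two disjoint edges enter
together or `b` and `d` are adjacent, and neither is possible. -/

section SolvableChain

/- A composition series indexed by `ℕ`, so that entry times of edges are natural numbers; steps
that add nothing are exempt from solvability. -/
structure IsSolvableChain (G : SimpleGraph V) (S : ℕ → Set (Sym2 V)) : Prop where
  mono : Monotone S
  subset_edgeSet : ∀ i, S i ⊆ G.edgeSet
  exists_mem : ∀ e ∈ G.edgeSet, ∃ i, e ∈ S i
  exists_eq_singleton : ∃ e, S 0 = {e}
  solvableStep : ∀ i, (S (i + 1) \ S i).Nonempty → SolvableStep G (S i) (S (i + 1))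

variable {G : SimpleGraph V}

theorem Hypersolvable.exists_isSolvableChain (hG : Hypersolvable G) :
    ∃ S, IsSolvableChain G S := by
  obtain ⟨n, S, hsub, hzero, hlast, hstep⟩ := hG
  refine ⟨fun i => S (Fin.clamp i n), ⟨?_, fun i => hsub _, ?_, ?_, ?_⟩⟩
  · exact (Fin.monotone_iff_le_succ.2 fun i => (hstep i).1).comp Fin.clamp_monotone
  · intro e he
    exact ⟨n, by rwa [Fin.clamp_eq_last n n le_rfl, hlast]⟩
  · simpa [Fin.clamp] using hzero
  · rintro i ⟨e, he, hne⟩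
    have hi : i < n := by
      by_contra! hi
      rw [Fin.clamp_eq_last _ _ hi] at hne
      rw [Fin.clamp_eq_last _ _ (by omega)] at he
      exact hne he
    have h₁ : Fin.clamp i n = (⟨i, hi⟩ : Fin n).castSucc := Fin.ext (by simp [Fin.clamp]; omega)
    have h₂ : Fin.clamp (i + 1) n = (⟨i, hi⟩ : Fin n).succ := Fin.ext (by simp [Fin.clamp]; omega)
    simpa only [h₁, h₂] using (hstep ⟨i, hi⟩).2

noncomputable def entryTime (S : ℕ → Set (Sym2 V)) (e : Sym2 V) : ℕ := sInf {i | e ∈ S i}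

theorem notMem_of_lt_entryTime {S : ℕ → Set (Sym2 V)} {e : Sym2 V} {i : ℕ}
    (hi : i < entryTime S e) : e ∉ S i :=
  Nat.notMem_of_lt_sInf hi

namespace IsSolvableChain

variable {S : ℕ → Set (Sym2 V)}

theorem mem_entryTime (hS : IsSolvableChain G S) {e : Sym2 V} (he : e ∈ G.edgeSet) :
    e ∈ S (entryTime S e) :=
  Nat.sInf_mem (hS.exists_mem e he)

theorem mem_of_entryTime_le (hS : IsSolvableChain G S) {e : Sym2 V} (he : e ∈ G.edgeSet)
    {i : ℕ} (hi : entryTime S e ≤ i) : e ∈ S i :=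
  hS.mono hi (hS.mem_entryTime he)

theorem mem_diff_of_entryTime_eq_succ (hS : IsSolvableChain G S) {e : Sym2 V}
    (he : e ∈ G.edgeSet) {i : ℕ} (hi : entryTime S e = i + 1) : e ∈ S (i + 1) \ S i :=
  ⟨hi ▸ hS.mem_entryTime he, notMem_of_lt_entryTime (by omega)⟩

theorem entryTime_le_max_of_adj (hS : IsSolvableChain G S) {x y z : V} (hxy : G.Adj x y)
    (hxz : G.Adj x z) (hyz : G.Adj y z) :
    entryTime S s(y, z) ≤ max (entryTime S s(x, y)) (entryTime S s(x, z)) := by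
  by_contra! h
  obtain ⟨i, hi⟩ := Nat.exists_eq_add_one_of_ne_zero (n := entryTime S s(y, z)) (by omega)
  have hnew := hS.mem_diff_of_entryTime_eq_succ hyz hi
  exact (hS.solvableStep i ⟨_, hnew⟩).1 x y z hxy hxz hyz
    ⟨hS.mem_of_entryTime_le hxy (by omega), hS.mem_of_entryTime_le hxz (by omega), hnew⟩

theorem entryTime_eq_of_lt (hS : IsSolvableChain G S) {x y z : V} (hxz : G.Adj x z)
    (hyz : G.Adj y z) (hxy : G.Adj x y) (h : entryTime S s(x, z) < entryTime S s(y, z)) :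
    entryTime S s(x, y) = entryTime S s(y, z) := by
  have h₁ := hS.entryTime_le_max_of_adj hxy hxz hyz
  have h₂ := hS.entryTime_le_max_of_adj hxz.symm hyz.symm hxy
  rw [Sym2.eq_swap (a := z) (b := x), Sym2.eq_swap (a := z) (b := y)] at h₂
  omega

theorem exists_adj_of_entryTime_eq (hS : IsSolvableChain G S) {e e' : Sym2 V}
    (he : e ∈ G.edgeSet) (he' : e' ∈ G.edgeSet) (hne : e ≠ e')
    (h : entryTime S e = entryTime S e') :
    ∃ v u u', e = s(v, u) ∧ e' = s(v, u') ∧ G.Adj u u' := by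
  cases ht : entryTime S e with
  | zero =>
    obtain ⟨e₀, h₀⟩ := hS.exists_eq_singleton
    have hmem := hS.mem_entryTime he
    have hmem' := hS.mem_entryTime he'
    rw [← h, ht, h₀] at hmem'
    rw [ht, h₀] at hmem
    exact absurd (hmem.trans hmem'.symm) hne
  | succ i =>
    have hnew := hS.mem_diff_of_entryTime_eq_succ he ht
    have hnew' := hS.mem_diff_of_entryTime_eq_succ he' (h ▸ ht)
    rcases (hS.solvableStep i ⟨_, hnew⟩).2 with ⟨e₀, hd, -⟩ | ⟨k, vs, v, -, -, -, -, hclique, hd⟩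
    · rw [hd] at hnew hnew'
      exact absurd (hnew.trans hnew'.symm) hne
    · rw [hd] at hnew hnew'
      obtain ⟨j, rfl, -⟩ := hnew
      obtain ⟨j', rfl, -⟩ := hnew'
      have hjj : j ≠ j' := by rintro rfl; exact hne rfl
      exact ⟨v, vs j, vs j', rfl, rfl, hS.subset_edgeSet i (hclique j j' hjj)⟩

theorem adj_of_entryTime_eq (hS : IsSolvableChain G S) {a b x : V} (hax : G.Adj a x)
    (hbx : G.Adj b x) (hab : a ≠ b) (h : entryTime S s(a, x) = entryTime S s(b, x)) :
    G.Adj a b := by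
  have hne : s(a, x) ≠ s(b, x) := by simp [hab, hax.ne]
  obtain ⟨v, u, u', h₁, h₂, huu'⟩ := hS.exists_adj_of_entryTime_eq hax hbx hne h
  simp only [Sym2.eq_iff] at h₁ h₂
  grind [hax.ne, hbx.ne]

theorem entryTime_ne_of_disjoint (hS : IsSolvableChain G S) {a b c d : V} (hab : G.Adj a b)
    (hcd : G.Adj c d) (hac : a ≠ c) (had : a ≠ d) (hbc : b ≠ c) (hbd : b ≠ d) :
    entryTime S s(a, b) ≠ entryTime S s(c, d) := by
  intro h
  have hne : s(a, b) ≠ s(c, d) := by simp [hac, had]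
  obtain ⟨v, u, u', h₁, h₂, -⟩ := hS.exists_adj_of_entryTime_eq hab hcd hne h
  simp only [Sym2.eq_iff] at h₁ h₂
  grind

theorem entryTime_spoke_lt_of_lt (hS : IsSolvableChain G S) {h b c d : V} (hbc : G.Adj b c)
    (hcd : G.Adj c d) (hbh : G.Adj b h) (hch : G.Adj c h) (hdh : G.Adj d h) (hbd : ¬G.Adj b d)
    (hbd' : b ≠ d)
    (hb : entryTime S s(b, h) < entryTime S s(c, h)) :
    entryTime S s(c, h) < entryTime S s(d, h) := by
  have hbc_eq := hS.entryTime_eq_of_lt hbh hch hbc hb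
  by_contra! hd
  rcases hd.eq_or_lt with hd | hd
  · exact hS.entryTime_ne_of_disjoint hbc hdh hbd' hbh.ne hcd.ne hch.ne (hbc_eq.trans hd.symm)
  · have hdc_eq := hS.entryTime_eq_of_lt hdh hch hcd.symm hd
    exact hbd (hS.adj_of_entryTime_eq hbc hcd.symm hbd' (hbc_eq.trans hdc_eq.symm))

theorem entryTime_spoke_lt_max (hS : IsSolvableChain G S) {h b c d : V} (hbc : G.Adj b c)
    (hcd : G.Adj c d) (hbh : G.Adj b h) (hch : G.Adj c h) (hdh : G.Adj d h) (hbd : ¬G.Adj b d)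
    (hbd' : b ≠ d) :
    entryTime S s(c, h) < max (entryTime S s(b, h)) (entryTime S s(d, h)) := by
  rcases lt_trichotomy (entryTime S s(b, h)) (entryTime S s(c, h)) with hb | hb | hb
  · exact lt_max_of_lt_right (hS.entryTime_spoke_lt_of_lt hbc hcd hbh hch hdh hbd hbd' hb)
  · rcases lt_trichotomy (entryTime S s(d, h)) (entryTime S s(c, h)) with hd | hd | hd
    · exact lt_max_of_lt_left <| hS.entryTime_spoke_lt_of_lt hcd.symm hbc.symm hdh hch hbh
        (hbd ∘ Adj.symm) hbd'.symm hd
    · exact absurd (hS.adj_of_entryTime_eq hbh hdh hbd' (hb.trans hd.symm)) hbd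
    · exact lt_max_of_lt_right hd
  · exact lt_max_of_lt_left hb

end IsSolvableChain

end SolvableChain

instance inst_s13 : DecidableRel W5.Adj := fun a b => decidable_of_iff' _ (fromRel_adj _ a b)

theorem stmt13_general (G : SimpleGraph V) (f : Fin 5 → V)
    (hf : Function.Injective f)
    (hind : ∀ a b : Fin 5, G.Adj (f a) (f b) ↔ W5.Adj a b) :
    ¬Hypersolvable G := by
  intro hG
  obtain ⟨S, hS⟩ := hG.exists_isSolvableChain
  have adj (a b : Fin 5) (hab : W5.Adj a b) : G.Adj (f a) (f b) := (hind a b).2 hab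
  have rim (b c d : Fin 5) (hW : W5.Adj b c ∧ W5.Adj c d ∧ W5.Adj b 4 ∧ W5.Adj c 4 ∧
      W5.Adj d 4 ∧ ¬W5.Adj b d ∧ b ≠ d) :
      entryTime S s(f c, f 4) < max (entryTime S s(f b, f 4)) (entryTime S s(f d, f 4)) :=
    let ⟨hbc, hcd, hb, hc, hd, hbd, hbd'⟩ := hW
    hS.entryTime_spoke_lt_max (adj _ _ hbc) (adj _ _ hcd) (adj _ _ hb) (adj _ _ hc) (adj _ _ hd)
      (mt (hind b d).1 hbd) (hf.ne hbd')
  have := rim 3 0 1 (by decide)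
  have := rim 0 1 2 (by decide)
  have := rim 1 2 3 (by decide)
  have := rim 2 3 0 (by decide)
  -- the inequality at a rim vertex whose spoke enters last fails
  omega

/-- A graph containing `W₅` as an induced subgraph is not hypersolvable. -/
theorem stmt13 [Fintype V] (G : SimpleGraph V) (f : Fin 5 → V)
    (hf : Function.Injective f)
    (hind : ∀ a b : Fin 5, G.Adj (f a) (f b) ↔ W5.Adj a b) :
    ¬Hypersolvable G :=
  stmt13_general G f hf hind
end
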